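/- arXiv:1308.3124 — 4 statements merged into one kernel-verified Lean document; each statement's English description precedes it below -/
import Mathlib

section
/- Fix an integer N ≥ 1, a real q with 0 < q < 1, positive reals a_1,…,a_N, and reals R, L ≥ 0. For every strictly decreasing x ∈ ℤ^N (x_1 > x_2 > … > x_N) and every y ∈ Y^N one has (𝓛^{q-PushASEP} H(·,y))(x) = (𝓛^{dual} H(x,·))(y), where (𝓛^{q-PushASEP} f)(x) := Σ_{i=1}^N R a_i (1 − q^{x_{i−1}−x_i−1})(f(x⁺_i) − f(x)) + Σ_{i=1}^N L a_i^{−1} Σ_{j=i}^N q^{x_i−x_j−(j−i)} (1 − q^{x_j−x_{j+1}−1})(f(x⁻_{j,i}) − f(x)) with the conventions q^{x_0−x_1−1} := 0 and q^{x_N−x_{N+1}−1} := 0, and (𝓛^{dual} g)(y) := Σ_{i=1}^N R a_i (1 − q^{y_i})(g(y^{i,i−1}) − g(y)) + Σ_{i=1}^N L a_i^{−1} Σ_{j=i}^N (q^{−y_j} − 1) q^{−(y_i+…+y_{j−1})} g(y^{j,i}), where any term whose explicit coefficient vanishes is omitted (so shifted arguments y^{j,i} that would leave Y^N never contribute). 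-/
/-- `H(x,y) = 0` if `y₀ > 0`, and `H(x,y) = ∏_{i=1}^N q^{(xᵢ+i) yᵢ}` otherwise. -/
noncomputable def Hfun (q : ℝ) (N : ℕ) (x : ℕ → ℤ) (y : ℕ → ℤ) : ℝ :=
  if 0 < y 0 then 0 else ∏ i ∈ Finset.Icc 1 N, q ^ ((x i + (i : ℤ)) * y i)

/-- `x⁺ᵢ`: the configuration `x` with `xᵢ` increased by 1. -/
def xplus (x : ℕ → ℤ) (i : ℕ) : ℕ → ℤ := Function.update x i (x i + 1)

/-- `x⁻_{j,i}`: the configuration `x` with `x_i, …, x_j` each decreased by 1. -/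
def xminus (x : ℕ → ℤ) (j i : ℕ) : ℕ → ℤ :=
  fun m => if i ≤ m ∧ m ≤ j then x m - 1 else x m

/-- `y^{j,i}`: `y` with `y_j` decreased by 1 and `y_i` increased by 1 (so `y^{i,i} = y`). -/
def ymove (y : ℕ → ℤ) (j i : ℕ) : ℕ → ℤ :=
  fun m => y m + (if m = i then 1 else 0) - (if m = j then 1 else 0)

/-- The generator of the q-PushASEP, with the conventions
`q^{x₀ - x₁ - 1} := 0` and `q^{x_N - x_{N+1} - 1} := 0`. -/
noncomputable def genPush (N : ℕ) (q : ℝ) (a : ℕ → ℝ) (R L : ℝ)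
    (f : (ℕ → ℤ) → ℝ) (x : ℕ → ℤ) : ℝ :=
  (∑ i ∈ Finset.Icc 1 N, R * a i * (1 - (if i = 1 then 0 else q ^ (x (i-1) - x i - 1)))
      * (f (xplus x i) - f x))
  + ∑ i ∈ Finset.Icc 1 N, L * (a i)⁻¹ *
      ∑ j ∈ Finset.Icc i N, q ^ (x i - x j - ((j : ℤ) - (i : ℤ)))
        * (1 - (if j = N then 0 else q ^ (x j - x (j+1) - 1)))
        * (f (xminus x j i) - f x)

/-- The dual operator `𝓛^{dual}`. -/
noncomputable def genDual (N : ℕ) (q : ℝ) (a : ℕ → ℝ) (R L : ℝ)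
    (g : (ℕ → ℤ) → ℝ) (y : ℕ → ℤ) : ℝ :=
  (∑ i ∈ Finset.Icc 1 N, R * a i * (1 - q ^ (y i)) * (g (ymove y i (i-1)) - g y))
  + ∑ i ∈ Finset.Icc 1 N, L * (a i)⁻¹ *
      ∑ j ∈ Finset.Icc i N,
        (q ^ (-(y j)) - 1) * q ^ (-(∑ m ∈ Finset.Ico i j, y m)) * g (ymove y j i)


/-!
Both sides are computed explicitly. For `y₀ > 0` every value of `H` that occurs vanishes. For
`y₀ = 0` write `H(x,y) = q^T` with `T = ∑ (xₘ + m) yₘ`; every move of `x` or `y` only shifts `T`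
by an explicit amount. The right-jump terms then agree term by term, and for each `i` the
left-jump terms differ by a telescoping sum in `j` that vanishes at both ends.
-/

open Finset

theorem prod_zpow_eq_zpow_sum {ι G₀ : Type*} [CommGroupWithZero G₀] {q : G₀} (hq : q ≠ 0)
    (s : Finset ι) (f : ι → ℤ) : ∏ m ∈ s, q ^ f m = q ^ ∑ m ∈ s, f m := by
  classical
  induction s using Finset.induction with
  | empty => simp
  | insert a s h ih => rw [prod_insert h, sum_insert h, ih, zpow_add₀ hq]

/-- The exponent of `H(x,y)` when `y₀ ≤ 0`. -/
def pairing (N : ℕ) (x y : ℕ → ℤ) : ℤ := ∑ m ∈ Icc 1 N, (x m + m) * y m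

section

variable {N i j : ℕ} {q : ℝ} {x y : ℕ → ℤ}

theorem Hfun_of_pos (h : 0 < y 0) : Hfun q N x y = 0 := if_pos h

theorem Hfun_of_nonpos (hq : q ≠ 0) (h : y 0 ≤ 0) : Hfun q N x y = q ^ pairing N x y := by
  rw [Hfun, if_neg h.not_gt, prod_zpow_eq_zpow_sum hq, pairing]

theorem pairing_xplus (hi : i ∈ Icc 1 N) : pairing N (xplus x i) y = pairing N x y + y i := by
  have hterm : ∀ m, (xplus x i m + m) * y m = (x m + m) * y m + if m = i then y i else 0 := by
    intro m
    rcases eq_or_ne m i with rfl | h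
    · simp only [xplus, Function.update_self, if_true]
      ring
    · simp only [xplus, Function.update_of_ne h, if_neg h, add_zero]
  simp only [pairing, hterm, sum_add_distrib, sum_ite_eq', if_pos hi]

theorem pairing_xminus (hi : 1 ≤ i) (hj : j ≤ N) :
    pairing N (xminus x j i) y = pairing N x y - ∑ m ∈ Icc i j, y m := by
  have hterm : ∀ m, (xminus x j i m + m) * y m
      = (x m + m) * y m - if m ∈ Icc i j then y m else 0 := by
    intro m
    by_cases h : i ≤ m ∧ m ≤ j
    · simp only [xminus, mem_Icc, if_pos h]
      ring
    · simp only [xminus, mem_Icc, if_neg h, sub_zero]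
  simp only [pairing, hterm, sum_sub_distrib, sum_ite_mem,
    inter_eq_right.mpr (Icc_subset_Icc hi hj)]

theorem pairing_ymove (hi : i ∈ Icc 1 N) (hj : j ∈ Icc 1 N) :
    pairing N x (ymove y j i) = pairing N x y + (x i + i) - (x j + j) := by
  have hterm : ∀ m, (x m + m) * ymove y j i m = (x m + m) * y m
      + ((if m = i then x i + i else 0) - if m = j then x j + j else 0) := by
    intro m
    simp only [ymove]
    split_ifs <;> subst_vars <;> ring
  simp only [pairing, hterm, sum_add_distrib, sum_sub_distrib, sum_ite_eq', if_pos hi, if_pos hj]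
  ring

theorem ymove_apply_zero (hi : i ≠ 0) (hj : j ≠ 0) : ymove y j i 0 = y 0 := by
  simp [ymove, hi.symm, hj.symm]

theorem le_ymove_apply_zero (hj : j ≠ 0) : y 0 ≤ ymove y j i 0 := by
  simp only [ymove, hj.symm, if_false]
  split_ifs <;> omega

theorem genPush_Hfun_of_pos (a : ℕ → ℝ) (R L : ℝ) (h : 0 < y 0) :
    genPush N q a R L (fun x' => Hfun q N x' y) x = 0 := by
  simp [genPush, Hfun_of_pos h]

theorem genDual_Hfun_of_pos (a : ℕ → ℝ) (R L : ℝ) (h : 0 < y 0) :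
    genDual N q a R L (fun y' => Hfun q N x y') y = 0 := by
  have hvanish : ∀ j ≠ 0, ∀ i, Hfun q N x (ymove y j i) = 0 := fun j hj i =>
    Hfun_of_pos (h.trans_le (le_ymove_apply_zero hj))
  have hR : ∀ i ∈ Icc 1 N, Hfun q N x (ymove y i (i - 1)) = 0 := fun i hi =>
    hvanish i (by grind) _
  have hL : ∀ i ∈ Icc 1 N, ∀ j ∈ Icc i N, Hfun q N x (ymove y j i) = 0 := fun i hi j hj =>
    hvanish j (by grind) i
  simp +contextual [genDual, Hfun_of_pos h, hR, hL]

theorem right_jump_term_duality (hq : q ≠ 0) (hy0 : y 0 = 0) (hi : i ∈ Icc 1 N) :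
    (1 - if i = 1 then 0 else q ^ (x (i - 1) - x i - 1)) * (Hfun q N (xplus x i) y - Hfun q N x y)
      = (1 - q ^ y i) * (Hfun q N x (ymove y i (i - 1)) - Hfun q N x y) := by
  have hH : ∀ x' : ℕ → ℤ, Hfun q N x' y = q ^ pairing N x' y := fun x' =>
    Hfun_of_nonpos hq hy0.le
  rw [hH, hH, pairing_xplus hi, zpow_add₀ hq]
  rcases eq_or_ne i 1 with rfl | hi1
  · have hvanish : Hfun q N x (ymove y 1 0) = 0 := Hfun_of_pos (by simp [ymove, hy0])
    rw [if_pos rfl, hvanish]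
    ring
  · have hi' : i - 1 ∈ Icc 1 N := by grind
    have hexp : pairing N x (ymove y i (i - 1)) = pairing N x y + (x (i - 1) - x i - 1) := by
      rw [pairing_ymove hi' hi, Nat.cast_sub (by grind)]
      ring
    rw [if_neg hi1, Hfun_of_nonpos hq (by rw [ymove_apply_zero (by grind) (by grind), hy0]),
      hexp, zpow_add₀ hq]
    ring

theorem left_jump_sum_duality (hq : q ≠ 0) (hy0 : y 0 = 0) (hi : 1 ≤ i) (hiN : i ≤ N) :
    ∑ j ∈ Icc i N, q ^ (x i - x j - ((j : ℤ) - (i : ℤ)))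
        * (1 - (if j = N then 0 else q ^ (x j - x (j + 1) - 1)))
        * (Hfun q N (xminus x j i) y - Hfun q N x y)
      = ∑ j ∈ Icc i N,
          (q ^ (-(y j)) - 1) * q ^ (-(∑ m ∈ Ico i j, y m)) * Hfun q N x (ymove y j i) := by
  set T := pairing N x y
  set c : ℕ → ℤ := fun k => x k + k
  set S : ℕ → ℤ := fun k => ∑ m ∈ Ico i k, y m
  -- `Φ (N + 1) = 0` encodes the convention `q^{x_N - x_{N+1} - 1} = 0`, and `Φ i = 0` as `S i = 0`.
  set Φ : ℕ → ℝ := fun k => if k ≤ N then q ^ (T + c i - c k) * (1 - q ^ (-S k)) else 0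
  have hterm : ∀ j ∈ Icc i N,
      q ^ (x i - x j - ((j : ℤ) - (i : ℤ)))
        * (1 - (if j = N then 0 else q ^ (x j - x (j + 1) - 1)))
        * (Hfun q N (xminus x j i) y - Hfun q N x y)
      = (q ^ (-(y j)) - 1) * q ^ (-S j) * Hfun q N x (ymove y j i) + (Φ (j + 1) - Φ j) := by
    intro j hj
    obtain ⟨hij, hjN⟩ := mem_Icc.1 hj
    have hSsucc : S (j + 1) = S j + y j := sum_Ico_succ_top hij _
    have hminus : Hfun q N (xminus x j i) y = q ^ (T - S (j + 1)) := by
      rw [Hfun_of_nonpos hq hy0.le, pairing_xminus hi hjN, ← Ico_add_one_right_eq_Icc]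
    have hmove : Hfun q N x (ymove y j i) = q ^ (T + c i - c j) := by
      rw [Hfun_of_nonpos hq (by rw [ymove_apply_zero (by omega) (by omega), hy0]),
        pairing_ymove (mem_Icc.2 ⟨hi, hiN⟩) (mem_Icc.2 ⟨by omega, hjN⟩)]
    have hdecay : x i - x j - ((j : ℤ) - i) = c i - c j := by ring
    have hH : Hfun q N x y = q ^ T := Hfun_of_nonpos hq hy0.le
    rw [hminus, hH, hmove, hdecay, hSsucc]
    rcases eq_or_ne j N with hjN' | hjN'
    · simp only [Φ, if_pos hjN', if_pos hjN, if_neg (show ¬j + 1 ≤ N by omega)]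
      simp only [zpow_add₀ hq, zpow_sub₀ hq, zpow_neg]
      field_simp
      ring
    · have hnext : x j - x (j + 1) - 1 = c j - c (j + 1) := by push_cast [c]; ring
      simp only [Φ, if_neg hjN', if_pos hjN, if_pos (show j + 1 ≤ N by omega), hnext, hSsucc]
      simp only [zpow_add₀ hq, zpow_sub₀ hq, zpow_neg]
      field_simp
      ring
  rw [sum_congr rfl hterm, sum_add_distrib, sum_Icc_sub hiN]
  simp [Φ, S]

end

theorem qPushASEP_duality_general (N : ℕ) (q : ℝ) (hq0 : 0 < q)
    (a : ℕ → ℝ) (R L : ℝ)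
    (x : ℕ → ℤ)
    (y : ℕ → ℤ) (hy : ∀ m, m ≤ N → 0 ≤ y m) :
    genPush N q a R L (fun x' => Hfun q N x' y) x
      = genDual N q a R L (fun y' => Hfun q N x y') y := by
  rcases (hy 0 N.zero_le).lt_or_eq with hpos | hzero
  · rw [genPush_Hfun_of_pos a R L hpos, genDual_Hfun_of_pos a R L hpos]
  · unfold genPush genDual
    congr 1
    · refine sum_congr rfl fun i hi => ?_
      rw [mul_assoc, right_jump_term_duality hq0.ne' hzero.symm hi, ← mul_assoc]
    · refine sum_congr rfl fun i hi => ?_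
      rw [left_jump_sum_duality hq0.ne' hzero.symm (mem_Icc.1 hi).1 (mem_Icc.1 hi).2]

/-- `(𝓛^{q-PushASEP} H(·,y))(x) = (𝓛^{dual} H(x,·))(y)`. -/
theorem qPushASEP_duality (N : ℕ) (hN : 1 ≤ N) (q : ℝ) (hq0 : 0 < q) (hq1 : q < 1)
    (a : ℕ → ℝ) (ha : ∀ i, 0 < a i) (R L : ℝ) (hR : 0 ≤ R) (hL : 0 ≤ L)
    (x : ℕ → ℤ) (hx : ∀ i, 1 ≤ i → i < N → x (i+1) < x i)
    (y : ℕ → ℤ) (hy : ∀ m, m ≤ N → 0 ≤ y m) :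
    genPush N q a R L (fun x' => Hfun q N x' y) x
      = genDual N q a R L (fun y' => Hfun q N x y') y :=
  qPushASEP_duality_general N q hq0 a R L x y hy
end

section
/- Fix N, k ≥ 1, 0 < q < 1, positive reals a_1, a_2, a_3, … and R, L ≥ 0, and let h_0 : Y^N_k → ℝ. Suppose u : ℝ_{≥0} × ℤ_{≥0}^k → ℝ is differentiable in t and satisfies: (i) for all t ≥ 0 and all n ∈ ℤ_{≥0}^k with every coordinate n_i ≥ 1, (d/dt) u(t,n) = R(1−q) Σ_{i=1}^k ([∇_a]_i u)(t,n) + L(1−q^{−1}) Σ_{i=1}^k ([∇_a^{−1}]_i u)(t,n); (ii) for all t ≥ 0 and all n ∈ ℤ_{≥0}^k such that n_i = n_{i+1} for some 1 ≤ i ≤ k−1: ([∇_a^{−1}]_i − q^{−1}[∇_a^{−1}]_{i+1}) u(t,n) = 0, and whenever additionally n_i ≥ 1, ([∇_a]_i − q[∇_a]_{i+1}) u(t,n) = 0; (iii) u(t,n) = 0 for all t ≥ 0 whenever n_k = 0; (iv) u(0, n(y)) = h_0(y) for all y ∈ Y^N_k. Then the function h(t,y) := u(t, n(y)) on ℝ_{≥0}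 × Y^N_k satisfies: (d/dt) h(t,y) = (𝓛^{dual} h(t,·))(y) for all y ∈ Y^N_k and t ≥ 0; h(t,y) = 0 whenever y_0 > 0; and h(0,y) = h_0(y). -/
/-!
Write `c v = y_v + ⋯ + y_N`; the entries of `n(y)` equal to `v` fill the block of positions
`[c (v + 1), c v)`.

If `y_0 = 0`, every entry of `n(y)` is positive and the free equation applies. Inside a block the
boundary condition gives `[∇_a]_i u = q^m [∇_a]_last u`, `m` the distance to the last position of
the block, so the block contributes
`(1 - q^{y_v}) [∇_a]_last u = a_v (1 - q^{y_v}) (h(y^{v,v-1}) - h(y))`.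
In the same way the cumulative condition reduces the block of `[∇_a⁻¹]` to
`(1 - q^{-y_v}) [∇_a⁻¹]_last u`. This is a sum over the value `j ≤ v` put in the last position; it
is evaluated by sliding that free position to the right across the blocks of values `v - 1, …, 1`,
each step costing a factor `q⁻¹` by the cumulative condition, which produces the terms
`q^{-(y_d + ⋯ + y_{v-1})} h(y^{v,d})` of the dual generator.

If `y_0 > 0`, then `h(t, y) = 0` for all `t` by (iii), and the same holds for every configuration
the dual generator reaches from `y`, so both sides of the equation vanish.
-/

/-- `([∇_a]_i u)(n) = a_{n_i} (u(n with n_i−1) − u(n))`, applied in the i-th coordinate. -/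
noncomputable def gradOp (k : ℕ) (a : ℕ → ℝ) (u : (Fin k → ℕ) → ℝ)
    (i : Fin k) (n : Fin k → ℕ) : ℝ :=
  a (n i) * (u (Function.update n i (n i - 1)) - u n)

/-- `([∇_a^{-1}] u)(n) = −Σ_{j=1}^{n} a_j⁻¹ u(j)`, applied in the i-th coordinate. -/
noncomputable def gradInv (k : ℕ) (a : ℕ → ℝ) (u : (Fin k → ℕ) → ℝ)
    (i : Fin k) (n : Fin k → ℕ) : ℝ :=
  -(∑ j ∈ Finset.Icc 1 (n i), (a j)⁻¹ * u (Function.update n i j))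

/-- `y^{j,i}`: `y` with `y_j` decreased by 1 and `y_i` increased by 1 (`y^{i,i} = y`). -/
def ymoveN (y : ℕ → ℕ) (j i : ℕ) : ℕ → ℕ :=
  fun m => if i = j then y m else if m = j then y m - 1 else if m = i then y m + 1 else y m

/-- The dual operator `𝓛^{dual}`. -/
noncomputable def genDualN (N : ℕ) (q : ℝ) (a : ℕ → ℝ) (R L : ℝ)
    (g : (ℕ → ℕ) → ℝ) (y : ℕ → ℕ) : ℝ :=
  (∑ i ∈ Finset.Icc 1 N, R * a i * (1 - q ^ (y i)) * (g (ymoveN y i (i-1)) - g y))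
  + ∑ i ∈ Finset.Icc 1 N, L * (a i)⁻¹ *
      ∑ j ∈ Finset.Icc i N,
        (q ^ (-(y j : ℤ)) - 1) * q ^ (-(∑ m ∈ Finset.Ico i j, (y m : ℤ))) * g (ymoveN y j i)

/-- Membership in `Y^N_k`: `y` is supported on `{0,…,N}` and `Σ y_i = k`. -/
def YNk (N k : ℕ) (y : ℕ → ℕ) : Prop :=
  (∀ m, N < m → y m = 0) ∧ (∑ m ∈ Finset.range (N+1), y m) = k

/-- `n(y)`: the weakly decreasing vector in `ℤ_{≥0}^k` containing each value `v`
with multiplicity `y_v`; its r-th coordinate (0-based `r`) is the largest `v ≤ N`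
with `y_v + y_{v+1} + … + y_N ≥ r+1`. -/
def nOf (N k : ℕ) (y : ℕ → ℕ) : Fin k → ℕ :=
  fun r => ((Finset.range (N+1)).filter fun v => r.1 + 1 ≤ ∑ m ∈ Finset.Icc v N, y m).sup id

open Finset

variable {M : Type*} [Monoid M] in
lemma eq_pow_mul_of_forall_eq_mul_succ {g : ℕ → M} {c : M} {A B : ℕ} (hAB : A ≤ B)
    (h : ∀ t, A ≤ t → t < B → g t = c * g (t + 1)) : g A = c ^ (B - A) * g B := by
  induction B, hAB using Nat.le_induction with
  | base => simp
  | succ B hAB ih =>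
    rw [ih fun t h₁ h₂ => h t h₁ (by omega), h B hAB (by omega), ← mul_assoc, ← pow_succ,
      Nat.sub_add_comm hAB]

variable {R : Type*} [CommRing R] in
lemma one_sub_mul_sum_Ico_of_forall_eq_mul_succ {g : ℕ → R} {c : R} {A B : ℕ}
    (h : ∀ t, A ≤ t → t + 1 < B → g t = c * g (t + 1)) :
    (1 - c) * ∑ t ∈ Ico A B, g t = (1 - c ^ (B - A)) * g (B - 1) := by
  rcases le_or_gt B A with hBA | hAB
  · simp [Ico_eq_empty_of_le hBA, Nat.sub_eq_zero_of_le hBA]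
  have hg : ∀ t ∈ Ico A B, g t = c ^ (B - 1 - t) * g (B - 1) := fun t ht => by
    rw [mem_Ico] at ht
    exact eq_pow_mul_of_forall_eq_mul_succ (by omega) fun s h₁ h₂ => h s (by omega) (by omega)
  rw [sum_congr rfl hg, ← sum_mul, ← mul_assoc, sum_Ico_eq_sum_range,
    ← sum_range_reflect, ← mul_neg_geom_sum]
  congr 2
  refine sum_congr rfl fun m hm => ?_
  rw [mem_range] at hm
  congr 1
  omega

lemma sum_Ico_sum_Ico_of_antitone {M : Type*} [AddCommMonoid M] {c : ℕ → ℕ} (hc : Antitone c)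
    (g : ℕ → M) {A B : ℕ} (hAB : A ≤ B) :
    ∑ v ∈ Ico A B, ∑ t ∈ Ico (c (v + 1)) (c v), g t = ∑ t ∈ Ico (c B) (c A), g t := by
  induction B, hAB using Nat.le_induction with
  | base => simp
  | succ B hAB ih =>
    rw [sum_Ico_succ_top hAB, ih, add_comm,
      sum_Ico_consecutive g (hc (Nat.le_succ B)) (hc hAB)]

noncomputable def natExtend {R : Type*} [Zero R] {k : ℕ} (G : Fin k → R) (t : ℕ) : R :=
  if h : t < k then G ⟨t, h⟩ else 0

lemma natExtend_apply {R : Type*} [Zero R] {k t : ℕ} (G : Fin k → R) (h : t < k) :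
    natExtend G t = G ⟨t, h⟩ :=
  dif_pos h

lemma sum_eq_sum_range_natExtend {R : Type*} [AddCommMonoid R] {k : ℕ} (G : Fin k → R) :
    ∑ i, G i = ∑ t ∈ range k, natExtend G t := by
  rw [← Fin.sum_univ_eq_sum_range]
  exact sum_congr rfl fun i _ => (natExtend_apply G i.2).symm

/-- `slide n p₀ p` shifts the entries of `n` at positions `p₀ + 1, …, p` one step to the left,
freeing position `p`. -/
def slide {k : ℕ} (n : Fin k → ℕ) (p₀ p : ℕ) : Fin k → ℕ :=
  fun r => if h : p₀ ≤ r.1 ∧ r.1 < p ∧ r.1 + 1 < k then n ⟨r.1 + 1, h.2.2⟩ else n r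

lemma slide_self {k : ℕ} (n : Fin k → ℕ) (p : ℕ) : slide n p p = n :=
  funext fun r => dif_neg fun h => by omega

def tailCount (N : ℕ) (y : ℕ → ℕ) (v : ℕ) : ℕ := ∑ m ∈ Icc v N, y m

section TailCount

variable {N k : ℕ} {y : ℕ → ℕ}

lemma tailCount_antitone : Antitone (tailCount N y) := fun _ _ h =>
  sum_le_sum_of_subset (Icc_subset_Icc_left h)

lemma tailCount_of_lt {v : ℕ} (h : N < v) : tailCount N y v = 0 := by
  rw [tailCount, Icc_eq_empty_of_lt h, sum_empty]

lemma tailCount_eq_add {v : ℕ} (h : v ≤ N) : tailCount N y v = y v + tailCount N y (v + 1) := by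
  rw [tailCount, tailCount, ← insert_Icc_add_one_left_eq_Icc h, sum_insert (by simp)]

lemma sum_range_eq_tailCount_zero : ∑ m ∈ range (N + 1), y m = tailCount N y 0 := by
  rw [tailCount, range_eq_Ico, Ico_add_one_right_eq_Icc]

lemma YNk.tailCount_zero (hy : YNk N k y) : tailCount N y 0 = k := by
  rw [← sum_range_eq_tailCount_zero, hy.2]

lemma YNk.tailCount_le (hy : YNk N k y) (v : ℕ) : tailCount N y v ≤ k :=
  hy.tailCount_zero ▸ tailCount_antitone (Nat.zero_le v)

lemma YNk.tailCount_one (hy : YNk N k y) : tailCount N y 1 = k - y 0 := by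
  have := hy.tailCount_zero
  rw [tailCount_eq_add (Nat.zero_le N), zero_add] at this
  omega

end TailCount

section Sorting

variable {N k : ℕ} {y : ℕ → ℕ}

lemma YNk.le_nOf_iff (hy : YNk N k y) (r : Fin k) (v : ℕ) :
    v ≤ nOf N k y r ↔ r.1 < tailCount N y v := by
  set S := (range (N + 1)).filter fun w => r.1 + 1 ≤ ∑ m ∈ Icc w N, y m
  have h0 : 0 ∈ S := by
    simp only [S, mem_filter, mem_range]
    exact ⟨N.succ_pos, hy.tailCount_zero ▸ r.2⟩
  obtain ⟨b, hb, hsup⟩ := exists_mem_eq_sup S ⟨0, h0⟩ id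
  simp only [S, mem_filter, mem_range] at hb
  change v ≤ S.sup id ↔ _
  rw [hsup]
  refine ⟨fun hv => lt_of_lt_of_le hb.2 (tailCount_antitone hv), fun hv => ?_⟩
  have hvN : v ≤ N := by
    by_contra h
    rw [tailCount_of_lt (by omega)] at hv
    omega
  exact hsup ▸ le_sup (f := id) (by simp only [S, mem_filter, mem_range]; exact ⟨by omega, hv⟩)

lemma YNk.nOf_eq_iff (hy : YNk N k y) (r : Fin k) (v : ℕ) :
    nOf N k y r = v ↔ tailCount N y (v + 1) ≤ r.1 ∧ r.1 < tailCount N y v := by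
  have := hy.le_nOf_iff r v
  have := hy.le_nOf_iff r (v + 1)
  omega

lemma YNk.nOf_eq_of_forall_le_iff (hy : YNk N k y) {n : Fin k → ℕ}
    (h : ∀ r v, v ≤ n r ↔ r.1 < tailCount N y v) : nOf N k y = n :=
  funext fun r => eq_of_forall_le_iff fun v => by rw [hy.le_nOf_iff, h]

lemma ymoveN_self (j : ℕ) : ymoveN y j j = y := by
  funext m
  simp [ymoveN]

lemma tailCount_ymoveN {s d : ℕ} (hds : d ≤ s) (hsN : s ≤ N) (hys : 1 ≤ y s) (w : ℕ) :
    tailCount N (ymoveN y s d) w + (if d < w ∧ w ≤ s then 1 else 0) = tailCount N y w := by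
  rcases hds.eq_or_lt with rfl | hds
  · rw [ymoveN_self, if_neg (by omega), add_zero]
  have hpt : ∀ m ∈ Icc w N, ymoveN y s d m + (if m = s then 1 else 0)
      = y m + (if m = d then 1 else 0) := fun m _ => by
    simp only [ymoveN, if_neg hds.ne]
    split_ifs <;> subst_vars <;> omega
  have hsum := sum_congr rfl hpt
  simp only [sum_add_distrib, sum_ite_eq', mem_Icc] at hsum
  simp only [tailCount]
  split_ifs at hsum ⊢ <;> omega

lemma YNk.ymoveN_of_le {s d : ℕ} (hy : YNk N k y) (hds : d ≤ s) (hsN : s ≤ N) (hys : 1 ≤ y s) :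
    YNk N k (ymoveN y s d) := by
  refine ⟨fun m hm => ?_, ?_⟩
  · simp only [ymoveN, if_neg (show m ≠ s by omega), if_neg (show m ≠ d by omega)]
    split_ifs <;> exact hy.1 m hm
  · have := tailCount_ymoveN hds hsN hys 0
    rw [if_neg (by omega), add_zero] at this
    rw [sum_range_eq_tailCount_zero, this, hy.tailCount_zero]

lemma YNk.nOf_ymoveN_pred (hy : YNk N k y) {v : ℕ} (hv : 1 ≤ v) (hvN : v ≤ N) (hyv : 1 ≤ y v)
    (hlast : tailCount N y v - 1 < k) :
    nOf N k (ymoveN y v (v - 1)) =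
      Function.update (nOf N k y) ⟨tailCount N y v - 1, hlast⟩ (v - 1) := by
  have hmove := tailCount_ymoveN (Nat.sub_le v 1) hvN hyv
  have hv1 := tailCount_eq_add (y := y) hvN
  refine (hy.ymoveN_of_le (Nat.sub_le v 1) hvN hyv).nOf_eq_of_forall_le_iff fun r w => ?_
  have hw := hmove w
  rw [Function.update_apply]
  split_ifs with hr
  · have hr' : r.1 = tailCount N y v - 1 := by rw [hr]
    rcases lt_trichotomy w v with hwv | rfl | hwv
    · have := tailCount_antitone (y := y) (N := N) hwv.le
      split_ifs at hw <;> omega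
    · split_ifs at hw <;> omega
    · have := tailCount_antitone (y := y) (N := N) (show v + 1 ≤ w by omega)
      split_ifs at hw <;> omega
  · have hr' : r.1 ≠ tailCount N y v - 1 := fun h => hr (Fin.ext h)
    rw [hy.le_nOf_iff]
    by_cases hwv : w = v
    · subst hwv
      split_ifs at hw <;> omega
    · split_ifs at hw <;> omega

lemma YNk.nOf_ymoveN (hy : YNk N k y) {s d : ℕ} (hds : d ≤ s) (hsN : s ≤ N) (hys : 1 ≤ y s)
    (hd : tailCount N y d - 1 < k) :
    nOf N k (ymoveN y s d) = Function.update
      (slide (nOf N k y) (tailCount N y s - 1) (tailCount N y d - 1))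
      ⟨tailCount N y d - 1, hd⟩ d := by
  have hs := tailCount_eq_add (y := y) hsN
  have hsd := tailCount_antitone (y := y) (N := N) hds
  refine (hy.ymoveN_of_le hds hsN hys).nOf_eq_of_forall_le_iff fun r w => ?_
  have hw := tailCount_ymoveN hds hsN hys w
  have hcmp : (w ≤ d → tailCount N y d ≤ tailCount N y w) ∧
      (d ≤ w → tailCount N y w ≤ tailCount N y d) ∧
      (s < w → tailCount N y w ≤ tailCount N y (s + 1)) ∧
      (w ≤ s → tailCount N y s ≤ tailCount N y w) :=
    ⟨fun h => tailCount_antitone h, fun h => tailCount_antitone h,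
      fun h => tailCount_antitone h, fun h => tailCount_antitone h⟩
  rw [Function.update_apply]
  split_ifs with hr
  · have hr' : r.1 = tailCount N y d - 1 := by rw [hr]
    split_ifs at hw <;> omega
  · have hr' : r.1 ≠ tailCount N y d - 1 := fun h => hr (Fin.ext h)
    simp only [slide]
    split_ifs with hsl
    · rw [hy.le_nOf_iff, Fin.val_mk]
      split_ifs at hw <;> omega
    · rw [hy.le_nOf_iff]
      split_ifs at hw <;> omega

lemma YNk.nOf_last_eq_zero (hy : YNk N k y) (hy0 : 0 < y 0)
    (h : k - 1 < k) : nOf N k y ⟨k - 1, h⟩ = 0 := by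
  have := hy.le_nOf_iff ⟨k - 1, h⟩ 1
  rw [hy.tailCount_one, Fin.val_mk] at this
  omega

end Sorting

def CumulativeCondition (k : ℕ) (a : ℕ → ℝ) (q : ℝ) (f : (Fin k → ℕ) → ℝ) : Prop :=
  ∀ (n : Fin k → ℕ) (i : Fin k) (h : i.1 + 1 < k), n i = n ⟨i.1 + 1, h⟩ →
    gradInv k a f i n = q⁻¹ * gradInv k a f ⟨i.1 + 1, h⟩ n

def BoundaryCondition (k : ℕ) (a : ℕ → ℝ) (q : ℝ) (f : (Fin k → ℕ) → ℝ) : Prop :=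
  ∀ (n : Fin k → ℕ) (i : Fin k) (h : i.1 + 1 < k), n i = n ⟨i.1 + 1, h⟩ → 1 ≤ n i →
    gradOp k a f i n = q * gradOp k a f ⟨i.1 + 1, h⟩ n

/-- `-slideSum a f n p₀ b p` is `[∇_a⁻¹]_p f` at `slide n p₀ p` with `b` put in position `p`. -/
noncomputable def slideSum {k : ℕ} (a : ℕ → ℝ) (f : (Fin k → ℕ) → ℝ) (n : Fin k → ℕ)
    (p₀ b p : ℕ) : ℝ :=
  if hp : p < k then ∑ j ∈ Icc 1 b, (a j)⁻¹ * f (Function.update (slide n p₀ p) ⟨p, hp⟩ j)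
  else 0

section Slide

variable {k : ℕ} {a : ℕ → ℝ} {q : ℝ} {f : (Fin k → ℕ) → ℝ}

lemma slideSum_zero (n : Fin k → ℕ) (p₀ p : ℕ) : slideSum a f n p₀ 0 p = 0 := by
  unfold slideSum
  split_ifs <;> simp

lemma slideSum_succ (n : Fin k → ℕ) (p₀ b : ℕ) {p : ℕ} (hp : p < k) :
    slideSum a f n p₀ (b + 1) p = slideSum a f n p₀ b p
      + (a (b + 1))⁻¹ * f (Function.update (slide n p₀ p) ⟨p, hp⟩ (b + 1)) := by
  rw [slideSum, slideSum, dif_pos hp, dif_pos hp, sum_Icc_succ_top (by omega)]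

lemma update_update_slide (n : Fin k → ℕ) {p₀ p : ℕ} (hp : p₀ ≤ p) (hpk : p + 1 < k) (j : ℕ) :
    Function.update (Function.update (slide n p₀ p) ⟨p, by omega⟩ (n ⟨p + 1, hpk⟩))
        ⟨p + 1, hpk⟩ j
      = Function.update (slide n p₀ (p + 1)) ⟨p + 1, hpk⟩ j := by
  funext r
  rcases eq_or_ne r ⟨p + 1, hpk⟩ with rfl | hr
  · simp
  rw [Function.update_of_ne hr, Function.update_of_ne hr]
  rcases eq_or_ne r ⟨p, by omega⟩ with rfl | hrp
  · rw [Function.update_self, slide, dif_pos ⟨hp, by simp, hpk⟩]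
  have hr' : r.1 ≠ p := fun h => hrp (Fin.ext h)
  have hr'' : r.1 ≠ p + 1 := fun h => hr (Fin.ext h)
  rw [Function.update_of_ne hrp]
  simp only [slide]
  split_ifs <;> first | rfl | omega

/-- The cumulative condition, applied at `slide n p₀ p` with `n_{p+1}` put in position `p`,
moves the free position one step to the right. -/
lemma CumulativeCondition.slideSum_eq (hcum : CumulativeCondition k a q f) (n : Fin k → ℕ)
    {p₀ p : ℕ} (hp : p₀ ≤ p) (hpk : p + 1 < k) :
    slideSum a f n p₀ (n ⟨p + 1, hpk⟩) p = q⁻¹ * slideSum a f n p₀ (n ⟨p + 1, hpk⟩) (p + 1) := by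
  set W := Function.update (slide n p₀ p) ⟨p, by omega⟩ (n ⟨p + 1, hpk⟩) with hW
  have hWp : W ⟨p, by omega⟩ = n ⟨p + 1, hpk⟩ := Function.update_self ..
  have hWp1 : W ⟨p + 1, hpk⟩ = n ⟨p + 1, hpk⟩ := by
    rw [hW, Function.update_of_ne (by simp), slide, dif_neg (by simp)]
  have h := hcum W ⟨p, by omega⟩ hpk (hWp.trans hWp1.symm)
  simp only [gradInv, hWp, hWp1] at h
  simp only [hW, Function.update_idem, update_update_slide n hp hpk] at h
  rw [slideSum, slideSum, dif_pos (by omega), dif_pos hpk]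
  linarith

lemma CumulativeCondition.slideSum_eq_pow_mul (hcum : CumulativeCondition k a q f)
    {n : Fin k → ℕ} {p₀ b A B : ℕ} (hA : p₀ ≤ A) (hAB : A ≤ B) (hBk : B < k)
    (hn : ∀ t (ht : t < k), A < t → t ≤ B → n ⟨t, ht⟩ = b) :
    slideSum a f n p₀ b A = q⁻¹ ^ (B - A) * slideSum a f n p₀ b B :=
  eq_pow_mul_of_forall_eq_mul_succ hAB fun t hAt htB => by
    simpa only [hn (t + 1) (by omega) (by omega) htB]
      using hcum.slideSum_eq n (hA.trans hAt) (by omega)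

end Slide

section Blocks

variable {N k : ℕ} {y : ℕ → ℕ} {a : ℕ → ℝ} {q : ℝ} {f : (Fin k → ℕ) → ℝ}

lemma YNk.nOf_eq_of_mem_block (hy : YNk N k y) {v t : ℕ} (ht : t < k)
    (h₁ : tailCount N y (v + 1) ≤ t) (h₂ : t < tailCount N y v) : nOf N k y ⟨t, ht⟩ = v :=
  (hy.nOf_eq_iff _ v).2 ⟨h₁, h₂⟩

lemma YNk.slideSum_nOf (hy : YNk N k y) (hcum : CumulativeCondition k a q f) (hq : q ≠ 0)
    {s : ℕ} (hsN : s ≤ N) (hys : 1 ≤ y s) {v : ℕ} (hvs : v ≤ s) :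
    slideSum a f (nOf N k y) (tailCount N y s - 1) v (tailCount N y v - 1)
      = ∑ d ∈ Icc 1 v, (a d)⁻¹ * q ^ (-∑ m ∈ Ico d v, (y m : ℤ)) * f (nOf N k (ymoveN y s d)) := by
  induction v with
  | zero => simp [slideSum_zero]
  | succ v ih =>
    have hs := tailCount_eq_add (y := y) hsN
    have hsv := tailCount_antitone (N := N) (y := y) hvs
    have hv := tailCount_eq_add (y := y) (show v ≤ N by omega)
    have hk := hy.tailCount_le v
    have hk' : tailCount N y (v + 1) - 1 < k := by omega
    rw [slideSum_succ _ _ _ hk', ← hy.nOf_ymoveN hvs hsN hys hk',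
      hcum.slideSum_eq_pow_mul (B := tailCount N y v - 1) (by omega) (by omega) (by omega)
        fun t ht h₁ h₂ => hy.nOf_eq_of_mem_block ht (by omega) (by omega),
      ih (by omega), sum_Icc_succ_top (by omega), Ico_self, sum_empty, neg_zero, zpow_zero,
      mul_one, mul_sum, show tailCount N y v - 1 - (tailCount N y (v + 1) - 1) = y v by omega]
    congr 1
    refine sum_congr rfl fun d hd => ?_
    rw [mem_Icc] at hd
    rw [sum_Ico_succ_top hd.2, neg_add, zpow_add₀ hq, zpow_neg q (y v : ℤ), zpow_natCast, inv_pow]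
    ring

lemma YNk.one_sub_mul_sum_gradOp (hy : YNk N k y) (hbdy : BoundaryCondition k a q f) {v : ℕ}
    (hv : 1 ≤ v) (hvN : v ≤ N) :
    (1 - q) * ∑ t ∈ Ico (tailCount N y (v + 1)) (tailCount N y v),
        natExtend (fun i => gradOp k a f i (nOf N k y)) t
      = a v * (1 - q ^ y v) * (f (nOf N k (ymoveN y v (v - 1))) - f (nOf N k y)) := by
  have hsplit := tailCount_eq_add (y := y) hvN
  have hk := hy.tailCount_le v
  rw [one_sub_mul_sum_Ico_of_forall_eq_mul_succ fun t h₁ h₂ => ?_]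
  · rw [show tailCount N y v - tailCount N y (v + 1) = y v by omega]
    rcases Nat.eq_zero_or_pos (y v) with hyv | hyv
    · simp [hyv]
    have hlast : tailCount N y v - 1 < k := by omega
    rw [natExtend_apply _ hlast, gradOp,
      hy.nOf_eq_of_mem_block (v := v) hlast (by omega) (by omega),
      ← hy.nOf_ymoveN_pred hv hvN hyv hlast]
    ring
  · rw [natExtend_apply _ (by omega), natExtend_apply _ (by omega)]
    have hnt := hy.nOf_eq_of_mem_block (show t < k by omega) h₁ (by omega)
    exact hbdy _ ⟨t, _⟩ (show t + 1 < k by omega)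
      (hnt.trans (hy.nOf_eq_of_mem_block (t := t + 1) _ (by omega) (by omega)).symm)
      (by rw [hnt]; exact hv)

lemma YNk.one_sub_inv_mul_sum_gradInv (hy : YNk N k y) (hcum : CumulativeCondition k a q f)
    (hq : q ≠ 0) {v : ℕ} (hvN : v ≤ N) :
    (1 - q⁻¹) * ∑ t ∈ Ico (tailCount N y (v + 1)) (tailCount N y v),
        natExtend (fun i => gradInv k a f i (nOf N k y)) t
      = ∑ d ∈ Icc 1 v, (q ^ (-(y v : ℤ)) - 1) * (a d)⁻¹ * q ^ (-∑ m ∈ Ico d v, (y m : ℤ))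
          * f (nOf N k (ymoveN y v d)) := by
  have hsplit := tailCount_eq_add (y := y) hvN
  have hk := hy.tailCount_le v
  rw [one_sub_mul_sum_Ico_of_forall_eq_mul_succ fun t h₁ h₂ => ?_]
  · rw [show tailCount N y v - tailCount N y (v + 1) = y v by omega]
    rcases Nat.eq_zero_or_pos (y v) with hyv | hyv
    · simp [hyv]
    have hlast : tailCount N y v - 1 < k := by omega
    have hgrad : gradInv k a f ⟨_, hlast⟩ (nOf N k y)
        = -slideSum a f (nOf N k y) (tailCount N y v - 1) v (tailCount N y v - 1) := by
      rw [gradInv, hy.nOf_eq_of_mem_block (v := v) hlast (by omega) (by omega), slideSum,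
        dif_pos hlast, slide_self]
    rw [natExtend_apply _ hlast, hgrad, hy.slideSum_nOf hcum hq hvN hyv le_rfl, mul_neg,
      ← neg_mul, mul_sum, zpow_neg, zpow_natCast, ← inv_pow]
    refine sum_congr rfl fun d _ => ?_
    ring
  · rw [natExtend_apply _ (by omega), natExtend_apply _ (by omega)]
    exact hcum _ ⟨t, _⟩ (show t + 1 < k by omega)
      ((hy.nOf_eq_of_mem_block _ h₁ (by omega)).trans
        (hy.nOf_eq_of_mem_block (t := t + 1) _ (by omega) (by omega)).symm)

end Blocks

section Generator

variable {N k : ℕ} {y : ℕ → ℕ}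

lemma YNk.sum_eq_sum_blocks {R : Type*} [AddCommMonoid R] (hy : YNk N k y) (hy0 : y 0 = 0)
    (G : Fin k → R) :
    ∑ i, G i
      = ∑ v ∈ Icc 1 N, ∑ t ∈ Ico (tailCount N y (v + 1)) (tailCount N y v), natExtend G t := by
  rw [sum_eq_sum_range_natExtend, ← Ico_add_one_right_eq_Icc,
    sum_Ico_sum_Ico_of_antitone tailCount_antitone _ (by omega), tailCount_of_lt (by omega),
    hy.tailCount_one, hy0, Nat.sub_zero, range_eq_Ico]

lemma YNk.free_generator_eq_genDualN (hy : YNk N k y) (hy0 : y 0 = 0) {a : ℕ → ℝ} {q : ℝ}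
    (hq : q ≠ 0) {f : (Fin k → ℕ) → ℝ} (hbdy : BoundaryCondition k a q f)
    (hcum : CumulativeCondition k a q f) (R L : ℝ) :
    R * (1 - q) * ∑ i, gradOp k a f i (nOf N k y) + L * (1 - q⁻¹) * ∑ i, gradInv k a f i (nOf N k y)
      = genDualN N q a R L (fun y' => f (nOf N k y')) y := by
  rw [hy.sum_eq_sum_blocks hy0, hy.sum_eq_sum_blocks hy0, genDualN, mul_sum, mul_sum]
  congr 1
  · refine sum_congr rfl fun v hv => ?_
    rw [mem_Icc] at hv
    rw [mul_assoc, hy.one_sub_mul_sum_gradOp hbdy hv.1 hv.2]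
    ring
  · rw [sum_congr rfl fun v hv => by
        rw [mul_assoc, hy.one_sub_inv_mul_sum_gradInv hcum hq (mem_Icc.1 hv).2, mul_sum],
      sum_comm' (t' := Icc 1 N) (s' := fun d => Icc d N) fun v d => by
        simp only [mem_Icc]
        omega]
    refine sum_congr rfl fun d _ => ?_
    rw [mul_sum]
    refine sum_congr rfl fun v _ => ?_
    ring

/-- Particles at `0` cannot leave it, so the dual generator preserves functions vanishing on
configurations with `y_0 > 0`. -/
lemma YNk.genDualN_eq_zero (hy : YNk N k y) (hy0 : 0 < y 0) {q : ℝ} {a : ℕ → ℝ} {R L : ℝ}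
    {g : (ℕ → ℕ) → ℝ} (hg : ∀ y', YNk N k y' → 0 < y' 0 → g y' = 0) :
    genDualN N q a R L g y = 0 := by
  have hmove : ∀ j ∈ Icc 1 N, ∀ i ≤ j, y j = 0 ∨ g (ymoveN y j i) = 0 := fun j hj i hij => by
    rw [mem_Icc] at hj
    refine (Nat.eq_zero_or_pos (y j)).imp id fun hyj => hg _ (hy.ymoveN_of_le hij hj.2 hyj) ?_
    simp only [ymoveN]
    split_ifs <;> omega
  have hdown : ∀ i ∈ Icc 1 N, R * a i * (1 - q ^ y i) * (g (ymoveN y i (i - 1)) - 0) = 0 :=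
    fun i hi => by rcases hmove i hi (i - 1) (Nat.sub_le i 1) with h | h <;> simp [h]
  have hup : ∀ i ∈ Icc 1 N, L * (a i)⁻¹ * ∑ j ∈ Icc i N,
      (q ^ (-(y j : ℤ)) - 1) * q ^ (-∑ m ∈ Ico i j, (y m : ℤ)) * g (ymoveN y j i) = 0 :=
    fun i hi => by
      rw [sum_eq_zero fun j hj => ?_, mul_zero]
      rw [mem_Icc] at hi hj
      rcases hmove j (mem_Icc.2 ⟨by omega, hj.2⟩) i hj.1 with h | h <;> simp [h]
  rw [genDualN, hg y hy hy0, sum_eq_zero hdown, sum_eq_zero hup, add_zero]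

end Generator

theorem free_evolution_implies_true_evolution
    (N k : ℕ) (hk : 1 ≤ k)
    (q : ℝ) (hq0 : 0 < q)
    (a : ℕ → ℝ) (R L : ℝ)
    (h0 : (ℕ → ℕ) → ℝ)
    (u : ℝ → (Fin k → ℕ) → ℝ)
    -- (i) free evolution equations
    (hfree : ∀ t : ℝ, 0 ≤ t → ∀ n : Fin k → ℕ, (∀ i, 1 ≤ n i) →
      HasDerivWithinAt (fun s => u s n)
        (R * (1 - q) * ∑ i, gradOp k a (u t) i n
          + L * (1 - q⁻¹) * ∑ i, gradInv k a (u t) i n) (Set.Ici 0) t)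
    -- (ii) two-body cumulative and boundary conditions
    (hbc : ∀ t : ℝ, 0 ≤ t → ∀ n : Fin k → ℕ, ∀ i : Fin k, ∀ h : i.1 + 1 < k,
      n i = n ⟨i.1 + 1, h⟩ →
        (gradInv k a (u t) i n - q⁻¹ * gradInv k a (u t) ⟨i.1 + 1, h⟩ n = 0)
        ∧ (1 ≤ n i → gradOp k a (u t) i n - q * gradOp k a (u t) ⟨i.1 + 1, h⟩ n = 0))
    -- (iii) vanishing when the last coordinate is 0
    (hzero : ∀ t : ℝ, 0 ≤ t → ∀ n : Fin k → ℕ, n ⟨k - 1, by omega⟩ = 0 → u t n = 0)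
    -- (iv) initial data inside the Weyl chamber
    (hinit : ∀ y : ℕ → ℕ, YNk N k y → u 0 (nOf N k y) = h0 y) :
    (∀ y : ℕ → ℕ, YNk N k y → ∀ t : ℝ, 0 ≤ t →
      HasDerivWithinAt (fun s => u s (nOf N k y))
        (genDualN N q a R L (fun y' => u t (nOf N k y')) y) (Set.Ici 0) t)
    ∧ (∀ t : ℝ, 0 ≤ t → ∀ y : ℕ → ℕ, YNk N k y → 0 < y 0 → u t (nOf N k y) = 0)
    ∧ (∀ y : ℕ → ℕ, YNk N k y → u 0 (nOf N k y) = h0 y) := by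
  have hcum (t : ℝ) (ht : 0 ≤ t) : CumulativeCondition k a q (u t) :=
    fun n i h hn => sub_eq_zero.1 (hbc t ht n i h hn).1
  have hbdy (t : ℝ) (ht : 0 ≤ t) : BoundaryCondition k a q (u t) :=
    fun n i h hn hpos => sub_eq_zero.1 ((hbc t ht n i h hn).2 hpos)
  have hvanish (t : ℝ) (ht : 0 ≤ t) (y : ℕ → ℕ) (hy : YNk N k y) (hy0 : 0 < y 0) :
      u t (nOf N k y) = 0 :=
    hzero t ht _ (hy.nOf_last_eq_zero hy0 _)
  refine ⟨fun y hy t ht => ?_, hvanish, hinit⟩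
  rcases Nat.eq_zero_or_pos (y 0) with hy0 | hy0
  · rw [← hy.free_generator_eq_genDualN hy0 hq0.ne' (hbdy t ht) (hcum t ht)]
    refine hfree t ht _ fun i => (hy.le_nOf_iff i 1).2 ?_
    rw [hy.tailCount_one, hy0, Nat.sub_zero]
    exact i.2
  · rw [hy.genDualN_eq_zero hy0 (hvanish t ht)]
    exact (hasDerivWithinAt_const t _ 0).congr (fun s hs => hvanish s hs y hy hy0)
      (hvanish t ht y hy hy0)
end

section
/- Fix k ≥ 1, 0 < q < 1 (more generally q ≠ 0), and positive reals a_1, a_2, …. Let u : ℤ_{≥0}^k → ℝ satisfy the two-body boundary conditions: for every n ∈ ℤ_{≥0}^k and every 1 ≤ i ≤ k−1 with n_i = n_{i+1} ≥ 1, ([∇_a]_i − q[∇_a]_{i+1}) u(n) = 0. Then for every n ∈ ℤ_{≥0}^k and indices b ≥ 0, c ≥ 1 with b + c ≤ k such that n_{b+1} = n_{b+2} = … = n_{b+c} ≥ 1 (a cluster of size c), one has ([∇_a]_r u)(n) = q^{b+c−r} ([∇_a]_{b+c} u)(n) for every b+1 ≤ r ≤ b+c, and consequently (1−q) Σ_{r=b+1}^{b+c}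 ([∇_a]_r u)(n) = (1 − q^c) ([∇_a]_{b+c} u)(n). -/
open Finset

theorem eq_pow_mul_of_eq_mul_succ {M : Type*} [Monoid M] {f : ℕ → M} {q : M} {b e : ℕ}
    (h : ∀ i, b ≤ i → i < e → f i = q * f (i + 1)) {r : ℕ} (hbr : b ≤ r) (hre : r ≤ e) :
    f r = q ^ (e - r) * f e := by
  induction hm : e - r generalizing r with
  | zero => rw [show r = e by omega, pow_zero, one_mul]
  | succ m ih =>
    rw [h r hbr (by omega), ih (by omega) (by omega) (by omega), ← mul_assoc, ← pow_succ']

theorem one_sub_mul_sum_Ico_pow {R : Type*} [CommRing R] (q : R) (b c : ℕ) :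
    (1 - q) * ∑ j ∈ Ico b (b + c), q ^ (b + c - 1 - j) = 1 - q ^ c := by
  rw [sum_Ico_eq_sum_range, Nat.add_sub_cancel_left, ← mul_neg_geom_sum, ← sum_range_reflect]
  refine congrArg _ (sum_congr rfl fun j hj => congrArg _ ?_)
  rw [mem_range] at hj
  omega

theorem Fin.sum_filter_val_mem_Ico {M : Type*} [AddCommMonoid M] {k b e : ℕ} (he : e ≤ k)
    (f : ℕ → M) :
    ∑ r ∈ univ.filter (fun r : Fin k => b ≤ r.1 ∧ r.1 < e), f r = ∑ j ∈ Ico b e, f j := by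
  rw [sum_filter, Fin.sum_univ_eq_sum_range (fun j => if b ≤ j ∧ j < e then f j else 0),
    ← sum_filter]
  congr 1
  ext j
  simp only [mem_filter, mem_range, mem_Ico]
  omega

-- Coordinates are 0-based: the paper's `n_r` is `n ⟨r - 1, _⟩`, and the cluster
-- `n_{b+1} = … = n_{b+c}` is the set of indices `r` with `b ≤ r < b + c`.
theorem boundary_conditions_cluster (k : ℕ)
    (q : ℝ)
    (a : ℕ → ℝ)
    (u : (Fin k → ℕ) → ℝ)
    (hbc : ∀ n : Fin k → ℕ, ∀ i : Fin k, ∀ h : i.1 + 1 < k,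
      n i = n ⟨i.1 + 1, h⟩ → 1 ≤ n i →
      gradOp k a u i n - q * gradOp k a u ⟨i.1 + 1, h⟩ n = 0)
    (n : Fin k → ℕ) (b c : ℕ) (hc : 1 ≤ c) (hbck : b + c ≤ k)
    (hcluster : ∀ r : Fin k, b ≤ r.1 → r.1 < b + c → n r = n ⟨b, by omega⟩)
    (hpos : 1 ≤ n ⟨b, by omega⟩) :
    (∀ r : Fin k, b ≤ r.1 → r.1 < b + c →
      gradOp k a u r n = q ^ (b + c - 1 - r.1) * gradOp k a u ⟨b + c - 1, by omega⟩ n)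
    ∧ (1 - q) * (∑ r ∈ Finset.univ.filter (fun r : Fin k => b ≤ r.1 ∧ r.1 < b + c),
          gradOp k a u r n)
        = (1 - q ^ c) * gradOp k a u ⟨b + c - 1, by omega⟩ n := by
  set g : ℕ → ℝ := fun j => if h : j < k then gradOp k a u ⟨j, h⟩ n else 0
  set last := gradOp k a u ⟨b + c - 1, by omega⟩ n
  have hg (r : Fin k) : gradOp k a u r n = g r := by simp [g]
  have hcluster' (j : ℕ) (hj : j < k) (hbj : b ≤ j) (hjc : j < b + c) :
      n ⟨j, hj⟩ = n ⟨b, by omega⟩ :=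
    hcluster ⟨j, hj⟩ hbj hjc
  have hstep (i : ℕ) (hbi : b ≤ i) (hi : i < b + c - 1) : g i = q * g (i + 1) := by
    have hik : i + 1 < k := by omega
    have hn : n ⟨i, by omega⟩ = n ⟨i + 1, hik⟩ := by
      rw [hcluster' i _ hbi (by omega), hcluster' (i + 1) hik (by omega) (by omega)]
    have hni : 1 ≤ n ⟨i, by omega⟩ := by rwa [hcluster' i _ hbi (by omega)]
    simpa only [hg, sub_eq_zero] using hbc n ⟨i, by omega⟩ hik hn hni
  have hchain (r : Fin k) (hbr : b ≤ r.1) (hr : r.1 < b + c) :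
      gradOp k a u r n = q ^ (b + c - 1 - r.1) * last := by
    rw [hg, show last = g (b + c - 1) from hg _]
    exact eq_pow_mul_of_eq_mul_succ hstep hbr (by omega)
  refine ⟨hchain, ?_⟩
  rw [sum_congr rfl fun r hr => hchain r (mem_filter.1 hr).2.1 (mem_filter.1 hr).2.2,
    Fin.sum_filter_val_mem_Ico hbck (fun j => q ^ (b + c - 1 - j) * last), ← sum_mul, ← mul_assoc,
    one_sub_mul_sum_Ico_pow]
end

section
/- Let 0 < q < 1 and 0 ≤ a < 1. If X is a q-geometric random variable with parameter a, i.e. P(X = k) = (a;q)_∞ · a^k / (q;q)_k for k ∈ ℤ_{≥0}, then E[q^X] = 1 − a; equivalently, Σ_{k=0}^∞ (a;q)_∞ · (a q)^k / (q;q)_k = 1 − a. -/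
/-!
Euler's series `e(x) = ∑ₖ xᵏ / (q;q)ₖ` satisfies `e(qx) = (1 - x) e(x)`, because
`(q;q)ₖ₊₁ = (q;q)ₖ (1 - qᵏ⁺¹)` makes the coefficients of `e(x) - e(qx)` those of `x e(x)`.
Iterating, `e(x) (x;q)ₙ = e(qⁿx) → e(0) = 1` (dominated convergence), which is Euler's identity `e(x) (x;q)_∞ = 1`.
Hence `E[q^X] = (a;q)_∞ e(qa) = (1 - a) (a;q)_∞ e(a) = 1 - a`.
-/

open Filter Topology Finset

namespace QGeometric

variable {q x : ℝ}

noncomputable def qFactorial (q : ℝ) (k : ℕ) : ℝ := ∏ i ∈ Icc 1 k, (1 - q ^ i)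

noncomputable def eulerSeries (q x : ℝ) : ℝ := ∑' k : ℕ, x ^ k / qFactorial q k

@[simp]
lemma qFactorial_zero : qFactorial q 0 = 1 := by simp [qFactorial]

lemma qFactorial_succ (k : ℕ) : qFactorial q (k + 1) = qFactorial q k * (1 - q ^ (k + 1)) :=
  prod_Icc_succ_top (by omega) _

lemma one_sub_pow_pos (hq : |q| < 1) {i : ℕ} (hi : i ≠ 0) : 0 < 1 - q ^ i := by
  have : |q| ^ i < 1 := pow_lt_one₀ (abs_nonneg q) hq hi
  linarith [le_abs_self (q ^ i), abs_pow q i]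

lemma qFactorial_pos (hq : |q| < 1) (k : ℕ) : 0 < qFactorial q k :=
  prod_pos fun i hi => one_sub_pow_pos hq (by simp at hi; omega)

lemma pow_succ_div_qFactorial_succ (k : ℕ) :
    x ^ (k + 1) / qFactorial q (k + 1) = x ^ k / qFactorial q k * (x / (1 - q ^ (k + 1))) := by
  rw [qFactorial_succ, pow_succ, mul_div_mul_comm]

lemma summable_pow_div_qFactorial (hq : |q| < 1) (hx : |x| < 1) :
    Summable fun k : ℕ => x ^ k / qFactorial q k := by
  have hratio : Tendsto (fun k : ℕ => |x| / (1 - q ^ (k + 1))) atTop (𝓝 |x|) := by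
    have hpow := (tendsto_pow_atTop_nhds_zero_of_abs_lt_one hq).comp (tendsto_add_atTop_nat 1)
    have hden : Tendsto (fun k : ℕ => 1 - q ^ (k + 1)) atTop (𝓝 1) := by
      simpa using tendsto_const_nhds.sub hpow
    simpa [div_eq_mul_inv] using (hden.inv₀ one_ne_zero).const_mul |x|
  have hr : |x| < (1 + |x|) / 2 := by linarith
  refine summable_of_ratio_norm_eventually_le (r := (1 + |x|) / 2) (by linarith) ?_
  filter_upwards [hratio.eventually_le_const hr] with k hk
  have hk1 := one_sub_pow_pos hq k.succ_ne_zero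
  rw [pow_succ_div_qFactorial_succ k, norm_mul, mul_comm, Real.norm_eq_abs (_ / _), abs_div,
    abs_of_pos hk1]
  exact mul_le_mul_of_nonneg_right hk (norm_nonneg _)

lemma eulerSeries_mul_left (hq : |q| < 1) (hx : |x| < 1) :
    eulerSeries q (q * x) = (1 - x) * eulerSeries q x := by
  have hqx : |q * x| < 1 := by
    rw [abs_mul]; nlinarith [abs_nonneg q, abs_nonneg x]
  have hsx := summable_pow_div_qFactorial hq hx
  have hsqx := summable_pow_div_qFactorial hq hqx
  have hterm (k : ℕ) : x ^ (k + 1) / qFactorial q (k + 1) - (q * x) ^ (k + 1) / qFactorial q (k + 1)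
      = x * (x ^ k / qFactorial q k) := by
    have hk1 := one_sub_pow_pos hq k.succ_ne_zero
    rw [← sub_div, mul_pow, ← one_sub_mul, qFactorial_succ]
    field_simp
    ring
  have : eulerSeries q x - eulerSeries q (q * x) = x * eulerSeries q x := by
    rw [eulerSeries, eulerSeries, ← hsx.tsum_sub hsqx, (hsx.sub hsqx).tsum_eq_zero_add]
    simp only [pow_zero, qFactorial_zero, sub_self, zero_add, hterm, tsum_mul_left]
  linarith

lemma eulerSeries_pow_mul (hq : |q| < 1) (hx : |x| < 1) (n : ℕ) :
    eulerSeries q (q ^ n * x) = eulerSeries q x * ∏ i ∈ range n, (1 - x * q ^ i) := by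
  induction n with
  | zero => simp
  | succ n ih =>
    have hqnx : |q ^ n * x| < 1 := by
      rw [abs_mul, abs_pow]
      nlinarith [pow_le_one₀ (abs_nonneg q) hq.le (n := n), abs_nonneg x, pow_nonneg (abs_nonneg q) n]
    rw [pow_succ', mul_assoc, eulerSeries_mul_left hq hqnx, ih, prod_range_succ]
    ring

lemma tendsto_eulerSeries_nhds_zero (hq : |q| < 1) : Tendsto (eulerSeries q) (𝓝 0) (𝓝 1) := by
  have hbound := summable_pow_div_qFactorial hq (x := 1 / 2) (by norm_num [abs_of_pos])
  have hlim : ∑' k : ℕ, (0 : ℝ) ^ k / qFactorial q k = 1 := by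
    rw [tsum_eq_single 0 fun k hk => by simp [hk]]
    simp
  rw [← hlim]
  refine tendsto_tsum_of_dominated_convergence hbound (fun k => ?_) ?_
  · exact ((continuous_pow k).tendsto 0).div_const _
  · filter_upwards [Metric.ball_mem_nhds 0 (by norm_num : (0 : ℝ) < 1 / 2)] with y hy k
    rw [Metric.mem_ball, dist_zero_right] at hy
    have hpos := (qFactorial_pos hq k).le
    rw [norm_div, norm_pow, Real.norm_of_nonneg hpos]
    gcongr

lemma multipliable_one_sub_mul_pow (hq : |q| < 1) (x : ℝ) :
    Multipliable fun i : ℕ => 1 - x * q ^ i := by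
  simpa [sub_eq_add_neg] using
    Real.multipliable_one_add_of_summable ((summable_geometric_of_abs_lt_one hq).mul_left (-x))

theorem eulerSeries_mul_tprod (hq : |q| < 1) (hx : |x| < 1) :
    eulerSeries q x * ∏' i : ℕ, (1 - x * q ^ i) = 1 := by
  have hpartial := ((multipliable_one_sub_mul_pow hq x).tendsto_prod_tprod_nat).const_mul
    (eulerSeries q x)
  have hshrink : Tendsto (fun n : ℕ => q ^ n * x) atTop (𝓝 0) := by
    simpa using (tendsto_pow_atTop_nhds_zero_of_abs_lt_one hq).mul_const x
  refine tendsto_nhds_unique hpartial ?_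
  simpa only [Function.comp_def, eulerSeries_pow_mul hq hx] using
    (tendsto_eulerSeries_nhds_zero hq).comp hshrink

end QGeometric

theorem qGeometric_expectation_q_pow (q a : ℝ) (hq0 : 0 < q) (hq1 : q < 1)
    (ha0 : 0 ≤ a) (ha1 : a < 1) :
    ∑' k : ℕ, (∏' i : ℕ, (1 - a * q ^ i)) * (a * q) ^ k
        / (∏ i ∈ Finset.Icc 1 k, (1 - q ^ i))
      = 1 - a := by
  have hq : |q| < 1 := by rw [abs_of_pos hq0]; exact hq1
  have ha : |a| < 1 := by rw [abs_of_nonneg ha0]; exact ha1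
  calc ∑' k : ℕ, (∏' i : ℕ, (1 - a * q ^ i)) * (a * q) ^ k / (∏ i ∈ Finset.Icc 1 k, (1 - q ^ i))
      = (∏' i : ℕ, (1 - a * q ^ i)) * QGeometric.eulerSeries q (q * a) := by
        simp only [mul_div_assoc, tsum_mul_left, mul_comm a q]; rfl
    _ = (1 - a) * (QGeometric.eulerSeries q a * ∏' i : ℕ, (1 - a * q ^ i)) := by
        rw [QGeometric.eulerSeries_mul_left hq ha]; ring
    _ = 1 - a := by rw [QGeometric.eulerSeries_mul_tprod hq ha, mul_one]
end
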